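/- arXiv:1906.03532 — 8 statements merged into one kernel-verified Lean document; each statement's English description precedes it below -/
import Mathlib

section
/- Let H be a d×d real matrix and let (g_i)_{i≥0} be a family of affine maps g_i : ℝ^d → ℝ^d all with the same linear part, i.e. g_i(θ) = Hθ + b_i for vectors b_i ∈ ℝ^d. For t ≥ 1 define the running average \bar g_t(θ) = (1/(t+1)) ∑_{i=0}^{t} g_i(θ). Then for any points θ_{t-1}, θ_t ∈ ℝ^d and any t ≥ 1, \bar g_t(θ_t) = (t/(t+1)) · \bar g_{t-1}(θ_{t-1}) + (1/(t+1)) · g_t(θ_t + t(θ_t − θ_{t-1})). -/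
/-! Gradients with a common linear part `f` differ from one point to another by the same vector
`f (θ - θ')`, so moving the `t` old gradients from `θ'` to `θ` costs `t • f (θ - θ')`, which is
exactly what evaluating the single new gradient at `θ + t • (θ - θ')` instead of `θ` adds. -/

open Finset

section AffineTransport

variable {M N F : Type*} [AddCommGroup M] [AddCommGroup N] [FunLike F M N]
  [AddMonoidHomClass F M N]

theorem sum_affine_eq_sum_add_card_nsmul {ι : Type*} (f : F) (b : ι → N) (g : ι → M → N)
    (hg : ∀ i θ, g i θ = f θ + b i) (s : Finset ι) (θ θ' : M) :
    ∑ i ∈ s, g i θ = ∑ i ∈ s, g i θ' + #s • f (θ - θ') := by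
  simp only [hg, sum_add_distrib, sum_const, map_sub, nsmul_sub]
  abel

theorem sum_range_succ_affine_transport (f : F) (b : ℕ → N) (g : ℕ → M → N)
    (hg : ∀ i θ, g i θ = f θ + b i) (t : ℕ) (θ θ' : M) :
    ∑ i ∈ range (t + 1), g i θ = ∑ i ∈ range t, g i θ' + g t (θ + t • (θ - θ')) := by
  rw [sum_range_succ, sum_affine_eq_sum_add_card_nsmul f b g hg, card_range, hg t,
    hg t, map_add, map_nsmul]
  abel

end AffineTransport

/-- **Implicit gradient transport identity.** If all component gradients are affine maps
`g i θ = H θ + b i` with the same linear part `H`, then the running average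
`ḡ t θ = (1/(t+1)) ∑_{i=0}^t g i θ` satisfies, for `t ≥ 1` and any points `θprev, θcur`,
`ḡ t θcur = (t/(t+1)) ḡ (t-1) θprev + (1/(t+1)) g t (θcur + t (θcur - θprev))`. -/
theorem igt_transport_identity {d : ℕ} (H : Matrix (Fin d) (Fin d) ℝ)
    (b : ℕ → Fin d → ℝ) (g : ℕ → (Fin d → ℝ) → (Fin d → ℝ))
    (hg : ∀ i θ, g i θ = H.mulVec θ + b i)
    (gbar : ℕ → (Fin d → ℝ) → (Fin d → ℝ))
    (hbar : ∀ t θ, gbar t θ = (1 / ((t : ℝ) + 1)) • ∑ i ∈ Finset.range (t + 1), g i θ)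
    (t : ℕ) (ht : 1 ≤ t) (θprev θcur : Fin d → ℝ) :
    gbar t θcur = ((t : ℝ) / ((t : ℝ) + 1)) • gbar (t - 1) θprev
      + (1 / ((t : ℝ) + 1)) • g t (θcur + (t : ℝ) • (θcur - θprev)) := by
  have hsum := sum_range_succ_affine_transport H.mulVecLin b g hg t θcur θprev
  have hprev : (((t - 1 : ℕ) : ℝ) + 1) = t := by
    rw [Nat.cast_sub ht, Nat.cast_one, sub_add_cancel]
  have ht0 : (t : ℝ) ≠ 0 := by positivity
  have hcoef : (t : ℝ) / (t + 1) * (1 / t) = 1 / (t + 1) := by field_simp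
  rw [hbar, hbar, hprev, Nat.sub_add_cancel ht, hsum, Nat.cast_smul_eq_nsmul, smul_smul, hcoef,
    smul_add]
end

section
/- Let g : ℝ^d → ℝ^d be affine with g(θ) = H(θ − θ*) for a d×d real matrix H and θ* ∈ ℝ^d, let (ε_t)_{t≥0} be vectors in ℝ^d, and let (θ_t)_{t≥0} be any sequence in ℝ^d. Define v_0 = g(θ_0) + ε_0 and, for t ≥ 1, v_t = (t/(t+1)) v_{t-1} + (1/(t+1)) g(θ_t + t(θ_t − θ_{t-1})) + (1/(t+1)) ε_t. Then for every t ≥ 0, v_t = g(θ_t) + (1/(t+1)) ∑_{i=0}^{t} ε_i. -/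
/-- **IGT velocity identity on a quadratic.** With `g θ = H (θ - θ*)` affine, noise vectors
`ε t` and any iterate sequence `θ t`, the IGT velocity recursion
`v 0 = g (θ 0) + ε 0`,
`v t = (t/(t+1)) v (t-1) + (1/(t+1)) g (θ t + t (θ t - θ (t-1))) + (1/(t+1)) ε t` for `t ≥ 1`,
yields `v t = g (θ t) + (1/(t+1)) ∑_{i=0}^t ε i` for every `t`. -/
theorem igt_velocity_eq_grad_plus_noise_average {d : ℕ}
    (H : Matrix (Fin d) (Fin d) ℝ) (θstar : Fin d → ℝ)
    (g : (Fin d → ℝ) → (Fin d → ℝ))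
    (hg : ∀ θ, g θ = H.mulVec (θ - θstar))
    (ε θ v : ℕ → Fin d → ℝ)
    (hv0 : v 0 = g (θ 0) + ε 0)
    (hv : ∀ t : ℕ, 1 ≤ t → v t = ((t : ℝ) / ((t : ℝ) + 1)) • v (t - 1)
        + (1 / ((t : ℝ) + 1)) • g (θ t + (t : ℝ) • (θ t - θ (t - 1)))
        + (1 / ((t : ℝ) + 1)) • ε t) :
    ∀ t : ℕ, v t = g (θ t) + (1 / ((t : ℝ) + 1)) • ∑ i ∈ Finset.range (t + 1), ε i := by
  intro t
  induction t with
  | zero => simpa using hv0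
  | succ n ih =>
    have h1 := hv (n + 1) (Nat.le_add_left 1 n)
    simp only [Nat.add_sub_cancel] at h1
    have hkey : g (θ (n + 1) + ((n + 1 : ℕ) : ℝ) • (θ (n + 1) - θ n))
        = g (θ (n + 1)) + ((n + 1 : ℕ) : ℝ) • (g (θ (n + 1)) - g (θ n)) := by
      rw [hg, hg, hg]
      have : θ (n + 1) + ((n + 1 : ℕ) : ℝ) • (θ (n + 1) - θ n) - θstar
          = (θ (n + 1) - θstar) + ((n + 1 : ℕ) : ℝ) • ((θ (n + 1) - θstar) - (θ n - θstar)) := by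
        module
      rw [this]
      simp [Matrix.mulVec_add, Matrix.mulVec_smul, Matrix.mulVec_sub]
    rw [h1, ih, hkey]
    conv_rhs => rw [Finset.sum_range_succ]
    push_cast
    have hn1 : (n : ℝ) + 1 ≠ 0 := by positivity
    have hn2 : (n : ℝ) + 1 + 1 ≠ 0 := by positivity
    match_scalars <;> field_simp <;> ring
end

section
/- Let g(θ) = H(θ − θ*) with H a d×d real matrix, α > 0, and (ε_t)_{t≥0} vectors in ℝ^d. Define v_0 = g(θ_0) + ε_0, and for t ≥ 1, v_t = (t/(t+1)) v_{t-1} + (1/(t+1)) g(θ_t + t(θ_t − θ_{t-1})) + (1/(t+1)) ε_t, together with θ_{t+1} = θ_t − α v_t for all t ≥ 0. Define d×d matrices N_{i,t} by N_{i,0} = 0 and, for t ≥ 1, N_{i,t} = (I − αH) N_{i,t-1} + (1/t) I if i < t and N_{i,t} = (I − αH) N_{i,t-1} otherwise. Then, writing Δ_t = θ_t − θ*, for every t ≥ 0: Δ_t = (I − αH)^t Δ_0 − α ∑_{i=0}^{t-1} N_{i,t} ε_i. -/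
/-- **Noise propagation identity for IGT iterates on a quadratic.** With `g θ = H (θ - θ*)`,
stepsize `α > 0`, IGT velocity recursion and parameter updates `θ (t+1) = θ t - α v t`,
the error `Δ t = θ t - θ*` satisfies
`Δ t = (I - α H)^t Δ 0 - α ∑_{i=0}^{t-1} N i t (ε i)`, where the matrices `N i t` obey
`N i 0 = 0` and `N i t = (I - α H) N i (t-1) + (1/t) I` if `i < t`,
`N i t = (I - α H) N i (t-1)` otherwise. -/
theorem igt_error_noise_decomposition {d : ℕ}
    (H : Matrix (Fin d) (Fin d) ℝ) (θstar : Fin d → ℝ) (α : ℝ) (hα : 0 < α)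
    (g : (Fin d → ℝ) → (Fin d → ℝ))
    (hg : ∀ θ, g θ = H.mulVec (θ - θstar))
    (ε θ v : ℕ → Fin d → ℝ)
    (hv0 : v 0 = g (θ 0) + ε 0)
    (hv : ∀ t : ℕ, 1 ≤ t → v t = ((t : ℝ) / ((t : ℝ) + 1)) • v (t - 1)
        + (1 / ((t : ℝ) + 1)) • g (θ t + (t : ℝ) • (θ t - θ (t - 1)))
        + (1 / ((t : ℝ) + 1)) • ε t)
    (hθ : ∀ t : ℕ, θ (t + 1) = θ t - α • v t)
    (N : ℕ → ℕ → Matrix (Fin d) (Fin d) ℝ)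
    (hN0 : ∀ i, N i 0 = 0)
    (hN : ∀ i t : ℕ, 1 ≤ t → N i t =
      if i < t then (1 - α • H) * N i (t - 1) + ((1 : ℝ) / (t : ℝ)) • 1
      else (1 - α • H) * N i (t - 1)) :
    ∀ t : ℕ, θ t - θstar = ((1 - α • H) ^ t).mulVec (θ 0 - θstar)
      - α • ∑ i ∈ Finset.range t, (N i t).mulVec (ε i) := by
  -- N i t = 0 when t ≤ i
  have hNzero : ∀ t i : ℕ, t ≤ i → N i t = 0 := by
    intro t
    induction t with
    | zero => intro i _; exact hN0 i
    | succ t ih =>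
      intro i hi
      rw [hN i (t + 1) (by omega), if_neg (by omega)]
      simp [ih i (by omega)]
  -- velocity identity: (t+1) • v t = (t+1) • H Δ_t + ∑_{i ≤ t} ε i
  have hw : ∀ t : ℕ, ((t : ℝ) + 1) • v t
      = ((t : ℝ) + 1) • H.mulVec (θ t - θstar) + ∑ i ∈ Finset.range (t + 1), ε i := by
    intro t
    induction t with
    | zero => simp [hv0, hg]
    | succ t ih =>
      have h1 := hv (t + 1) (by omega)
      simp only [Nat.add_sub_cancel, hg] at h1
      have harg : θ (t + 1) + ((t + 1 : ℕ) : ℝ) • (θ (t + 1) - θ t) - θstar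
          = (θ t - θstar) - (((t : ℝ) + 2) * α) • v t := by
        rw [hθ t]
        push_cast
        module
      rw [harg] at h1
      simp only [Matrix.mulVec_sub, Matrix.mulVec_smul] at h1
      rw [hθ t]
      rw [Finset.sum_range_succ]
      have hΔ : θ t - α • v t - θstar = (θ t - θstar) - α • v t := by module
      rw [hΔ]
      simp only [Matrix.mulVec_sub, Matrix.mulVec_smul]
      simp only [Matrix.mulVec_sub] at ih
      push_cast at h1 ⊢
      have ht2 : ((t : ℝ) + 2) ≠ 0 := by positivity
      linear_combination (norm := skip) (((t : ℝ) + 2) • h1 + ih)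
      match_scalars <;> field_simp <;> ring
  intro t
  induction t with
  | zero => simp
  | succ t ih =>
    have ht1 : ((t : ℝ) + 1) ≠ 0 := by positivity
    have hvt : v t = H.mulVec (θ t - θstar)
        + (((t : ℝ) + 1))⁻¹ • ∑ i ∈ Finset.range (t + 1), ε i := by
      have h := hw t
      calc v t = ((t : ℝ) + 1)⁻¹ • (((t : ℝ) + 1) • v t) := by
            rw [smul_smul, inv_mul_cancel₀ ht1, one_smul]
        _ = _ := by
            rw [h, smul_add, smul_smul, inv_mul_cancel₀ ht1, one_smul]
    have hsum : ∑ i ∈ Finset.range (t + 1), (N i (t + 1)).mulVec (ε i)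
        = ∑ i ∈ Finset.range (t + 1),
            (((1 - α • H) * N i t).mulVec (ε i) + ((t : ℝ) + 1)⁻¹ • ε i) := by
      refine Finset.sum_congr rfl fun i hi => ?_
      rw [hN i (t + 1) (by omega), if_pos (by simpa using Finset.mem_range.mp hi)]
      rw [Matrix.add_mulVec, Matrix.smul_mulVec, Matrix.one_mulVec]
      push_cast
      rw [one_div]
    have ih' : ((1 - α • H) ^ t).mulVec (θ 0 - θstar)
        = (θ t - θstar) + α • ∑ i ∈ Finset.range t, (N i t).mulVec (ε i) := by
      rw [ih]; module
    have hAt : ((1 - α • H) ^ (t + 1)).mulVec (θ 0 - θstar)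
        = (1 - α • H).mulVec (((1 - α • H) ^ t).mulVec (θ 0 - θstar)) := by
      rw [pow_succ', Matrix.mulVec_mulVec]
    rw [hθ t, hvt, hsum, hAt, ih']
    rw [Finset.sum_add_distrib]
    rw [Finset.sum_range_succ (fun i => ((1 - α • H) * N i t).mulVec (ε i))]
    rw [hNzero t t le_rfl, mul_zero, Matrix.zero_mulVec, add_zero]
    have hexp : (1 - α • H).mulVec ((θ t - θstar)
          + α • ∑ i ∈ Finset.range t, (N i t).mulVec (ε i))
        = (θ t - θstar) - α • H.mulVec (θ t - θstar)
          + α • ∑ i ∈ Finset.range t, ((1 - α • H) * N i t).mulVec (ε i) := by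
      rw [Matrix.mulVec_add, Matrix.mulVec_smul]
      rw [show (1 - α • H).mulVec (∑ i ∈ Finset.range t, (N i t).mulVec (ε i))
            = ∑ i ∈ Finset.range t, (1 - α • H).mulVec ((N i t).mulVec (ε i)) from by
          simp only [← Matrix.mulVecLin_apply, map_sum]]
      simp only [Matrix.mulVec_mulVec]
      rw [Matrix.sub_mulVec, Matrix.one_mulVec, Matrix.smul_mulVec]
    rw [hexp, ← Finset.smul_sum]
    module
end

section
/- Let r ∈ [0, 1) and for each i ∈ ℕ define real numbers N_{i,t} by N_{i,0} = 0 and, for t ≥ 1, N_{i,t} = r N_{i,t-1} + 1/t if i < t and N_{i,t} = r N_{i,t-1} otherwise. Then for all integers 1 ≤ i < t one has N_{i,t} ≤ log(t/i), and for i = 0 and all t ≥ 1 one has N_{0,t} ≤ 1 + log t. -/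
/-!
Unrolling the recursion, `N i t = ∑_{i < s ≤ t} r^(t-s) / s`, so `0 ≤ r ≤ 1` gives
`N i t ≤ ∑_{i < s ≤ t} 1/s`. This tail of the harmonic series is at most `log (t / i)` because
`1/(s+1) ≤ log (s+1) - log s` telescopes, and for `i = 0` it is the harmonic number `H_t ≤ 1 + log t`.
-/

open Finset Real

theorem inv_add_one_le_log_add_one_sub_log {x : ℝ} (hx : 0 < x) :
    (x + 1)⁻¹ ≤ log (x + 1) - log x := by
  have h := one_sub_inv_le_log_of_pos (div_pos (by linarith) hx : 0 < (x + 1) / x)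
  rw [log_div (by linarith) hx.ne', inv_div] at h
  have : 1 - x / (x + 1) = (x + 1)⁻¹ := by field_simp; ring
  linarith

theorem sum_Ioc_inv_le_log_div {i t : ℕ} (hi : i ≠ 0) (hit : i ≤ t) :
    ∑ s ∈ Ioc i t, (s : ℝ)⁻¹ ≤ log (t / i) := by
  have hi' : (0 : ℝ) < i := by positivity
  induction t, hit using Nat.le_induction with
  | base => simp
  | succ t hit ih =>
    have ht : (0 : ℝ) < t := hi'.trans_le (by exact_mod_cast hit)
    rw [sum_Ioc_succ_top hit, log_div (by positivity) hi'.ne']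
    rw [log_div ht.ne' hi'.ne'] at ih
    push_cast
    linarith [inv_add_one_le_log_add_one_sub_log ht]

theorem sum_Ioc_zero_inv_eq_harmonic (t : ℕ) :
    ∑ s ∈ Ioc 0 t, (s : ℝ)⁻¹ = harmonic t := by
  rw [← Icc_add_one_left_eq_Ioc, harmonic_eq_sum_Icc]
  push_cast
  rfl

theorem noise_coeff_le_sum_Ioc_inv {r : ℝ} (hr0 : 0 ≤ r) (hr1 : r ≤ 1) {N : ℕ → ℕ → ℝ}
    (hN0 : ∀ i, N i 0 = 0)
    (hN : ∀ i t : ℕ, 1 ≤ t → N i t =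
      if i < t then r * N i (t - 1) + 1 / (t : ℝ) else r * N i (t - 1))
    (i t : ℕ) : N i t ≤ ∑ s ∈ Ioc i t, (s : ℝ)⁻¹ := by
  induction t with
  | zero => simp [hN0]
  | succ t ih =>
    have hdamp : r * N i t ≤ ∑ s ∈ Ioc i t, (s : ℝ)⁻¹ :=
      (mul_le_mul_of_nonneg_left ih hr0).trans
        (mul_le_of_le_one_left (sum_nonneg fun s _ => by positivity) hr1)
    rw [hN i (t + 1) (Nat.le_add_left 1 t), Nat.add_sub_cancel]
    split_ifs with hit
    · rw [sum_Ioc_succ_top (Nat.lt_succ_iff.mp hit), one_div]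
      linarith
    · rwa [Ioc_eq_empty (by omega), sum_empty] at hdamp ⊢

/-- **Logarithmic bound on the IGT scalar noise coefficients.** For `r ∈ [0,1)` and the
recursion `N i 0 = 0`, `N i t = r N i (t-1) + 1/t` if `i < t` and `N i t = r N i (t-1)`
otherwise: for all `1 ≤ i < t` one has `N i t ≤ log (t/i)`, and for all `t ≥ 1` one has
`N 0 t ≤ 1 + log t`. -/
theorem igt_noise_coeff_log_bound
    (r : ℝ) (hr0 : 0 ≤ r) (hr1 : r < 1)
    (N : ℕ → ℕ → ℝ)
    (hN0 : ∀ i, N i 0 = 0)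
    (hN : ∀ i t : ℕ, 1 ≤ t → N i t =
      if i < t then r * N i (t - 1) + 1 / (t : ℝ) else r * N i (t - 1)) :
    (∀ i t : ℕ, 1 ≤ i → i < t → N i t ≤ Real.log ((t : ℝ) / (i : ℝ))) ∧
    (∀ t : ℕ, 1 ≤ t → N 0 t ≤ 1 + Real.log (t : ℝ)) := by
  have hbound := noise_coeff_le_sum_Ioc_inv hr0 hr1.le hN0 hN
  refine ⟨fun i t hi hit => ?_, fun t _ => ?_⟩
  · exact (hbound i t).trans (sum_Ioc_inv_le_log_div (by omega) hit.le)
  · calc N 0 t ≤ ∑ s ∈ Ioc 0 t, (s : ℝ)⁻¹ := hbound 0 t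
      _ = harmonic t := sum_Ioc_zero_inv_eq_harmonic t
      _ ≤ 1 + log t := harmonic_le_one_add_log t
end

section
/- Let h ∈ ℝ, θ* ∈ ℝ, and g(θ) = h(θ − θ*). On a probability space, let (ε_t)_{t≥0} be integrable real random variables with E[ε_t] = 0 for all t, let α > 0 and μ ≥ 0, and define random iterates with θ_0 deterministic, v_0 = g(θ_0) + ε_0, w_0 = 0; for t ≥ 1: v_t = (t/(t+1)) v_{t-1} + (1/(t+1)) g(θ_t + t(θ_t − θ_{t-1})) + (1/(t+1)) ε_t; and for t ≥ 0: w_{t+1} = μ w_t + α v_t, θ_{t+1} = θ_t − w_{t+1}. Assume all iterates are integrable. Then for every t ≥ 0, E[v_t] = g(E[θ_t]) = h(E[θ_t] − θ*). -/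
open MeasureTheory ProbabilityTheory

/-- **Unbiasedness of the IGT estimator on a scalar quadratic.** With `g θ = h (θ - θ*)`,
zero-mean integrable noises `ε t`, stepsize `α > 0`, momentum `μ ≥ 0`, and the Heavyball-IGT
iterates (θ 0 deterministic, all iterates integrable), the velocity satisfies
`E[v t] = g (E[θ t]) = h (E[θ t] - θ*)` for every `t`. -/
theorem heavyball_igt_unbiased
    (h θstar : ℝ) (g : ℝ → ℝ) (hg : ∀ x, g x = h * (x - θstar))
    {Ω : Type*} [MeasureSpace Ω] [IsProbabilityMeasure (ℙ : Measure Ω)]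
    (ε : ℕ → Ω → ℝ)
    (hεint : ∀ t, Integrable (ε t))
    (hεmean : ∀ t, (∫ ω, ε t ω) = 0)
    (α μ : ℝ) (hα : 0 < α) (hμ : 0 ≤ μ)
    (θ v w : ℕ → Ω → ℝ)
    (hθ0 : ∃ c : ℝ, θ 0 = fun _ => c)
    (hv0 : ∀ ω, v 0 ω = g (θ 0 ω) + ε 0 ω)
    (hw0 : ∀ ω, w 0 ω = 0)
    (hv : ∀ t : ℕ, 1 ≤ t → ∀ ω, v t ω = ((t : ℝ) / ((t : ℝ) + 1)) * v (t - 1) ω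
        + (1 / ((t : ℝ) + 1)) * g (θ t ω + (t : ℝ) * (θ t ω - θ (t - 1) ω))
        + (1 / ((t : ℝ) + 1)) * ε t ω)
    (hw : ∀ t : ℕ, ∀ ω, w (t + 1) ω = μ * w t ω + α * v t ω)
    (hθ : ∀ t : ℕ, ∀ ω, θ (t + 1) ω = θ t ω - w (t + 1) ω)
    (hθint : ∀ t, Integrable (θ t))
    (hvint : ∀ t, Integrable (v t))
    (hwint : ∀ t, Integrable (w t)) :
    ∀ t : ℕ, (∫ ω, v t ω) = g (∫ ω, θ t ω) ∧
      g (∫ ω, θ t ω) = h * ((∫ ω, θ t ω) - θstar) := by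
  have key : ∀ t : ℕ, (∫ ω, v t ω) = h * ((∫ ω, θ t ω) - θstar) := by
    intro t
    induction t with
    | zero =>
      obtain ⟨c, hc⟩ := hθ0
      have h1 : (∫ ω, v 0 ω) = ∫ ω, (g c + ε 0 ω) := by
        congr 1; funext ω; rw [hv0, hc]
      have h2 : (∫ ω, θ 0 ω) = c := by rw [hc]; simp
      rw [h1, h2, integral_add (integrable_const _) (hεint 0), hεmean 0,
        integral_const, hg]
      simp
    | succ t ih =>
      set S : ℝ := (t : ℝ)
      have hS : (0:ℝ) < S + 2 := by positivity
      have hcast : ((t + 1 : ℕ) : ℝ) = S + 1 := by push_cast; ring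
      have hveq : ∀ ω, v (t+1) ω = ((S+1)/(S+2)) * v t ω
          + (1/(S+2)) * (h * (θ (t+1) ω + (S+1) * (θ (t+1) ω - θ t ω) - θstar))
          + (1/(S+2)) * ε (t+1) ω := by
        intro ω
        rw [hv (t+1) (by omega) ω, hcast, Nat.add_sub_cancel, hg]
        ring
      have hsub : Integrable (fun ω => θ (t+1) ω - θ t ω) := (hθint (t+1)).sub (hθint t)
      have hmul : Integrable (fun ω => (S+1) * (θ (t+1) ω - θ t ω)) := hsub.const_mul _
      have hadd : Integrable (fun ω => θ (t+1) ω + (S+1) * (θ (t+1) ω - θ t ω)) :=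
        (hθint (t+1)).add hmul
      have hint2a : Integrable (fun ω => θ (t+1) ω + (S+1) * (θ (t+1) ω - θ t ω) - θstar) :=
        hadd.sub (integrable_const _)
      have hint1 : Integrable (fun ω => ((S+1)/(S+2)) * v t ω) := (hvint t).const_mul _
      have hint2 : Integrable (fun ω =>
          (1/(S+2)) * (h * (θ (t+1) ω + (S+1) * (θ (t+1) ω - θ t ω) - θstar))) :=
        (hint2a.const_mul h).const_mul _
      have hint12 : Integrable (fun ω => ((S+1)/(S+2)) * v t ω
          + (1/(S+2)) * (h * (θ (t+1) ω + (S+1) * (θ (t+1) ω - θ t ω) - θstar))) :=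
        hint1.add hint2
      have hint3 : Integrable (fun ω => (1/(S+2)) * ε (t+1) ω) := (hεint (t+1)).const_mul _
      have hsplit : (∫ ω, v (t+1) ω)
          = (∫ ω, ((S+1)/(S+2)) * v t ω)
          + (∫ ω, (1/(S+2)) * (h * (θ (t+1) ω + (S+1) * (θ (t+1) ω - θ t ω) - θstar)))
          + (∫ ω, (1/(S+2)) * ε (t+1) ω) := by
        simp_rw [hveq]
        rw [integral_add hint12 hint3, integral_add hint1 hint2]
      have hmid : (∫ ω, (h * (θ (t+1) ω + (S+1) * (θ (t+1) ω - θ t ω) - θstar)))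
          = h * ((∫ ω, θ (t+1) ω) + (S+1) * ((∫ ω, θ (t+1) ω) - (∫ ω, θ t ω)) - θstar) := by
        rw [integral_const_mul, integral_sub hadd (integrable_const _),
          integral_add (hθint (t+1)) hmul, integral_const_mul,
          integral_sub (hθint (t+1)) (hθint t), integral_const]
        simp
      rw [hsplit, integral_const_mul, integral_const_mul, hmid, integral_const_mul,
        hεmean, ih]
      field_simp
      ring
  intro t
  exact ⟨by rw [key t, hg], by rw [hg]⟩
end

section
/- Let h ∈ ℝ, θ* ∈ ℝ, g(θ) = h(θ − θ*), α > 0, μ ≥ 0, and let (ε_t)_{t≥0} be real numbers. Define v_0 = g(θ_0) + ε_0, w_0 = 0, and for t ≥ 1: v_t = (t/(t+1)) v_{t-1} + (1/(t+1)) g(θ_t + t(θ_t − θ_{t-1})) + (1/(t+1)) ε_t; and for t ≥ 0: w_{t+1} = μ w_t + α v_t, θ_{t+1} = θ_t − w_{t+1}. Let A be the 2×2 real matrix with rows (1 − αh + μ, −μ) and (1, 0), write Δ_t = (θ_t − θ*, θ_{t-1} − θ*) ∈ ℝ² for t ≥ 1 (with Δ_0 = (θ_0 − θ*, θ_0 −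 θ*) as initial condition making Δ_1 consistent), and define 2×2 matrices N_{i,t} by N_{i,0} = 0 and, for t ≥ 1, N_{i,t} = A N_{i,t-1} + (1/t) I if i < t and N_{i,t} = A N_{i,t-1} otherwise. Then for every t ≥ 0: Δ_t = A^t Δ_0 − α ∑_{i=0}^{t-1} N_{i,t} (ε_i, 0). -/
/-- **Noise propagation for Heavyball-IGT on a scalar quadratic.** With `g θ = h (θ - θ*)`,
stepsize `α > 0`, momentum `μ ≥ 0`, noise `ε t`, the Heavyball-IGT recursion
`v 0 = g (θ 0) + ε 0`, `w 0 = 0`,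
`v t = (t/(t+1)) v (t-1) + (1/(t+1)) g (θ t + t (θ t - θ (t-1))) + (1/(t+1)) ε t` for `t ≥ 1`,
`w (t+1) = μ w t + α v t`, `θ (t+1) = θ t - w (t+1)`, and the stacked error vectors
`Δ 0 = (θ 0 - θ*, θ 0 - θ*)`, `Δ (t+1) = (θ (t+1) - θ*, θ t - θ*)` satisfy
`Δ t = A^t Δ 0 - α ∑_{i=0}^{t-1} N i t (ε i, 0)`, where `A = [[1 - α h + μ, -μ], [1, 0]]` and
`N i 0 = 0`, `N i t = A N i (t-1) + (1/t) I` if `i < t`, `N i t = A N i (t-1)` otherwise. -/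
theorem heavyball_igt_error_noise_decomposition
    (h θstar : ℝ) (α μ : ℝ) (hα : 0 < α) (hμ : 0 ≤ μ)
    (g : ℝ → ℝ) (hg : ∀ x, g x = h * (x - θstar))
    (ε θ v w : ℕ → ℝ)
    (hv0 : v 0 = g (θ 0) + ε 0)
    (hw0 : w 0 = 0)
    (hv : ∀ t : ℕ, 1 ≤ t → v t = ((t : ℝ) / ((t : ℝ) + 1)) * v (t - 1)
        + (1 / ((t : ℝ) + 1)) * g (θ t + (t : ℝ) * (θ t - θ (t - 1)))
        + (1 / ((t : ℝ) + 1)) * ε t)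
    (hw : ∀ t : ℕ, w (t + 1) = μ * w t + α * v t)
    (hθ : ∀ t : ℕ, θ (t + 1) = θ t - w (t + 1))
    (A : Matrix (Fin 2) (Fin 2) ℝ)
    (hA : A = !![1 - α * h + μ, -μ; 1, 0])
    (Δ : ℕ → Fin 2 → ℝ)
    (hΔ0 : Δ 0 = ![θ 0 - θstar, θ 0 - θstar])
    (hΔ : ∀ t : ℕ, Δ (t + 1) = ![θ (t + 1) - θstar, θ t - θstar])
    (N : ℕ → ℕ → Matrix (Fin 2) (Fin 2) ℝ)
    (hN0 : ∀ i, N i 0 = 0)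
    (hN : ∀ i t : ℕ, 1 ≤ t → N i t =
      if i < t then A * N i (t - 1) + ((1 : ℝ) / (t : ℝ)) • 1
      else A * N i (t - 1)) :
    ∀ t : ℕ, Δ t = (A ^ t).mulVec (Δ 0)
      - α • ∑ i ∈ Finset.range t, (N i t).mulVec ![ε i, 0] := by
  -- A acting on a pair
  have hAv : ∀ a b : ℝ, A.mulVec ![a, b] = ![(1 - α * h + μ) * a + (-μ) * b, a] := by
    intro a b; subst hA; funext j; fin_cases j <;>
      simp [Matrix.mulVec, dotProduct, Fin.sum_univ_two]
  -- v t = g (θ t) + average noise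
  have hvS : ∀ t : ℕ, v t = g (θ t) + (1 / ((t : ℝ) + 1)) * ∑ i ∈ Finset.range (t + 1), ε i := by
    intro t
    induction t with
    | zero => simpa using hv0
    | succ s ih =>
      have hs : ((s : ℝ) + 1) ≠ 0 := by positivity
      have hs2 : ((s : ℝ) + 1 + 1) ≠ 0 := by positivity
      have := hv (s + 1) (Nat.le_add_left 1 s)
      simp only [Nat.add_sub_cancel] at this
      have hS : ∑ i ∈ Finset.range (s + 1 + 1), ε i
          = (∑ i ∈ Finset.range (s + 1), ε i) + ε (s + 1) :=
        Finset.sum_range_succ ε (s + 1)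
      rw [this, ih, hS, hg, hg, hg]
      push_cast
      field_simp
      ring
  -- N i t = 0 for t ≤ i
  have hNz : ∀ i t : ℕ, t ≤ i → N i t = 0 := by
    intro i t
    induction t with
    | zero => intro _; exact hN0 i
    | succ s ih =>
      intro hle
      have h1 := hN i (s + 1) (Nat.le_add_left 1 s)
      rw [if_neg (by omega)] at h1
      simp only [Nat.add_sub_cancel] at h1
      rw [h1, ih (by omega), mul_zero]
  -- key one-step recursion
  have key : ∀ t : ℕ, Δ (t + 1) = A.mulVec (Δ t)
      - (α / ((t : ℝ) + 1)) • ![∑ i ∈ Finset.range (t + 1), ε i, 0] := by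
    intro t
    cases t with
    | zero =>
      rw [hΔ 0, hΔ0, hAv]
      funext j
      fin_cases j <;>
        simp [hθ 0, hw 0, hw0, hv0, hg] <;> ring
    | succ s =>
      have hw' : w (s + 1) = θ s - θ (s + 1) := by have := hθ s; linarith
      rw [hΔ (s + 1), hΔ s, hAv]
      funext j
      fin_cases j <;>
        simp [hθ (s + 1), hw (s + 1), hw', hvS (s + 1), hg] <;> push_cast <;> ring
  -- main induction
  intro t
  induction t with
  | zero => simp
  | succ t ih =>
    have hs : ((t : ℝ) + 1) ≠ 0 := by positivity
    rw [key t, ih, Matrix.mulVec_sub, Matrix.mulVec_smul, Matrix.mulVec_mulVec, ← pow_succ']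
    have hsum : ∑ i ∈ Finset.range (t + 1), (N i (t + 1)).mulVec ![ε i, 0]
        = (∑ i ∈ Finset.range t, A.mulVec ((N i t).mulVec ![ε i, 0]))
          + (1 / ((t : ℝ) + 1)) • ![∑ i ∈ Finset.range (t + 1), ε i, 0] := by
      have hNt : ∀ i ∈ Finset.range (t + 1),
          (N i (t + 1)).mulVec ![ε i, 0]
            = A.mulVec ((N i t).mulVec ![ε i, 0])
              + (1 / ((t : ℝ) + 1)) • (![ε i, 0] : Fin 2 → ℝ) := by
        intro i hi
        have h1 := hN i (t + 1) (Nat.le_add_left 1 t)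
        rw [if_pos (Finset.mem_range.mp hi)] at h1
        simp only [Nat.add_sub_cancel] at h1
        rw [h1, Matrix.add_mulVec, Matrix.smul_mulVec, Matrix.one_mulVec,
          ← Matrix.mulVec_mulVec]
        push_cast
        ring_nf
      rw [Finset.sum_congr rfl hNt, Finset.sum_add_distrib]
      congr 1
      · rw [Finset.sum_range_succ, hNz t t le_rfl]
        simp
      · rw [← Finset.smul_sum]
        congr 1
        funext j
        fin_cases j <;> simp [Finset.sum_apply]
    rw [hsum, smul_add]
    have hms : A.mulVec (∑ i ∈ Finset.range t, (N i t).mulVec ![ε i, 0])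
        = ∑ i ∈ Finset.range t, A.mulVec ((N i t).mulVec ![ε i, 0]) := by
      simpa only [Matrix.mulVecLin_apply] using map_sum A.mulVecLin (fun i => (N i t).mulVec ![ε i, 0]) (Finset.range t)
    have hsc : (α / ((t : ℝ) + 1)) • (![∑ i ∈ Finset.range (t + 1), ε i, 0] : Fin 2 → ℝ)
        = α • (1 / ((t : ℝ) + 1)) • (![∑ i ∈ Finset.range (t + 1), ε i, 0] : Fin 2 → ℝ) := by
      rw [smul_smul]; congr 1; field_simp
    rw [hms, hsc]
    abel
end

section
/- Let H be a symmetric positive definite d×d real matrix, θ* ∈ ℝ^d, g(θ) = H(θ − θ*), α > 0, μ ≥ 0. On a probability space, let (ε_t)_{t≥0} be integrable random vectors in ℝ^d with E[ε_t] = 0, and define random iterates with θ_0 deterministic, v_0 = g(θ_0) + ε_0, w_0 = 0; for t ≥ 1: v_t = (t/(t+1)) v_{t-1} + (1/(t+1)) g(θ_t + t(θ_t − θ_{t-1})) + (1/(t+1)) ε_t; and for t ≥ 0: w_{t+1} = μ w_t + α v_t, θ_{t+1} = θ_t − w_{t+1}. Assume all iterates are integrable. Let A be the 2d×2d block matrix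 with block rows (I − αH + μI, −μI) and (I, 0). Then for every t ≥ 1: the stacked expected error (E[θ_t − θ*], E[θ_{t-1} − θ*]) equals A^{t-1} (E[θ_1 − θ*], E[θ_0 − θ*]). In particular, if the spectral radius of A is strictly less than 1, then E[θ_t − θ*] converges linearly to zero. -/
/-!
On a quadratic the IGT estimator is unbiased: g is affine, so
t g(θ_{t-1}) + g(θ_t + t (θ_t - θ_{t-1})) = (t + 1) g(θ_t), and by induction E[v_t] = g(E[θ_t]).
Hence the expected errors e_t follow the deterministic heavy-ball recursion
e_{t+2} = (I - αH + μI) e_{t+1} - μ e_t, a second-order linear recursion whose companion matrix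
is A. Linear convergence follows from Gelfand's formula: for any ρ between the spectral radius
of A and 1, ‖A^t‖ ≤ ρ^t for all large t, hence ‖A^t‖ ≤ C ρ^t for all t.
-/

open MeasureTheory ProbabilityTheory

/-- The spectral radius of a real square matrix: the maximum modulus of its complex
eigenvalues. -/
noncomputable def specRad {n : Type*} [Fintype n] [DecidableEq n]
    (A : Matrix n n ℝ) : ℝ :=
  sSup ((fun z : ℂ => ‖z‖) '' spectrum ℂ (A.map (algebraMap ℝ ℂ)))

open Filter
open scoped Matrix

theorem exists_forall_le_mul_pow_of_eventually_le {u : ℕ → ℝ} {ρ : ℝ} (hρ : 0 < ρ)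
    (h : ∀ᶠ n in atTop, u n ≤ ρ ^ n) : ∃ C, 0 ≤ C ∧ ∀ n, u n ≤ C * ρ ^ n := by
  obtain ⟨N, hN⟩ := h.exists_forall_of_atTop
  set S := ∑ k ∈ Finset.range N, |u k| / ρ ^ k
  have hS : 0 ≤ S := by positivity
  refine ⟨1 + S, by positivity, fun n => ?_⟩
  rcases lt_or_ge n N with hn | hn
  · have hle : |u n| / ρ ^ n ≤ S :=
      Finset.single_le_sum (f := fun k => |u k| / ρ ^ k) (fun k _ => by positivity)
        (Finset.mem_range.mpr hn)
    calc u n ≤ |u n| / ρ ^ n * ρ ^ n := by field_simp; exact le_abs_self _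
      _ ≤ (1 + S) * ρ ^ n := by gcongr; linarith
  · calc u n ≤ ρ ^ n := hN n hn
      _ ≤ (1 + S) * ρ ^ n := le_mul_of_one_le_left (by positivity) (by linarith)

section GelfandFormula

variable {A : Type*} [NormedRing A] [NormedAlgebra ℂ A] [CompleteSpace A]

theorem eventually_norm_pow_le_of_spectralRadius_lt (a : A) {ρ : ℝ}
    (h : spectralRadius ℂ a < ENNReal.ofReal ρ) : ∀ᶠ n in atTop, ‖a ^ n‖ ≤ ρ ^ n := by
  have hρ : 0 < ρ := ENNReal.ofReal_pos.mp (pos_of_gt h)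
  filter_upwards [(spectrum.pow_norm_pow_one_div_tendsto_nhds_spectralRadius a).eventually_lt_const
    h, eventually_gt_atTop 0] with n hn hn0
  rw [ENNReal.ofReal_lt_ofReal_iff hρ, one_div,
    Real.rpow_inv_lt_iff_of_pos (norm_nonneg _) hρ.le (by positivity), Real.rpow_natCast] at hn
  exact hn.le

theorem exists_norm_pow_le_of_spectralRadius_lt_one (a : A) (h : spectralRadius ℂ a < 1) :
    ∃ C ρ : ℝ, 0 ≤ C ∧ 0 < ρ ∧ ρ < 1 ∧ ∀ n, ‖a ^ n‖ ≤ C * ρ ^ n := by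
  obtain ⟨ρ, -, hρa, hρ1⟩ := ENNReal.lt_iff_exists_real_btwn.mp h
  have hρ0 : 0 < ρ := ENNReal.ofReal_pos.mp (pos_of_gt hρa)
  obtain ⟨C, hC, hbound⟩ := exists_forall_le_mul_pow_of_eventually_le hρ0
    (eventually_norm_pow_le_of_spectralRadius_lt a hρa)
  exact ⟨C, ρ, hC, hρ0, by simpa using hρ1, hbound⟩

end GelfandFormula

namespace Matrix

section LinftyOpNorm

attribute [local instance] Matrix.linftyOpNormedAddCommGroup Matrix.linftyOpNormedRing
  Matrix.linftyOpNormedAlgebra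

variable {m n : Type*} [Fintype m] [Fintype n]

theorem linfty_opNorm_map_eq {α β : Type*} [NormedAddCommGroup α] [NormedAddCommGroup β]
    (A : Matrix m n α) (f : α → β) (hf : ∀ a, ‖f a‖₊ = ‖a‖₊) : ‖A.map f‖ = ‖A‖ := by
  simp [linfty_opNorm_def, hf]

variable [DecidableEq n]

theorem spectralRadius_map_le_specRad (A : Matrix n n ℝ) :
    spectralRadius ℂ (A.map (algebraMap ℝ ℂ)) ≤ ENNReal.ofReal (specRad A) := by
  refine iSup₂_le fun z hz => ?_
  rw [← enorm_eq_nnnorm, ← ofReal_norm]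
  exact ENNReal.ofReal_le_ofReal <|
    le_csSup (((finite_spectrum _).image _).bddAbove) ⟨z, hz, rfl⟩

theorem exists_norm_pow_mulVec_le_of_specRad_lt_one (A : Matrix n n ℝ) (h : specRad A < 1) :
    ∃ C ρ : ℝ, 0 ≤ C ∧ 0 ≤ ρ ∧ ρ < 1 ∧ ∀ t x, ‖(A ^ t) *ᵥ x‖ ≤ C * ρ ^ t * ‖x‖ := by
  have : CompleteSpace (Matrix n n ℂ) := FiniteDimensional.complete ℂ _
  obtain ⟨C, ρ, hC, hρ0, hρ1, hbound⟩ := exists_norm_pow_le_of_spectralRadius_lt_one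
    (A.map (algebraMap ℝ ℂ))
    ((spectralRadius_map_le_specRad A).trans_lt (ENNReal.ofReal_lt_one.mpr h))
  refine ⟨C, ρ, hC, hρ0.le, hρ1, fun t x => (linfty_opNorm_mulVec _ x).trans ?_⟩
  have hnorm : ‖A ^ t‖ = ‖A.map (algebraMap ℝ ℂ) ^ t‖ := by
    rw [← Matrix.map_pow, linfty_opNorm_map_eq _ _ fun a => by simp]
  rw [hnorm]
  gcongr
  exact hbound t

end LinftyOpNorm

variable {R m : Type*} [Fintype m] [DecidableEq m]

theorem pow_mulVec_of_forall_succ [CommSemiring R] {A : Matrix m m R} {x : ℕ → m → R}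
    (h : ∀ t, x (t + 1) = A *ᵥ x t) (t : ℕ) : x t = (A ^ t) *ᵥ x 0 := by
  induction t with
  | zero => simp
  | succ t ih => rw [h, ih, mulVec_mulVec, ← pow_succ']

theorem fromBlocks_one_zero_mulVec_sumElim [CommRing R] (P Q : Matrix m m R) (a b : m → R) :
    fromBlocks P Q 1 0 *ᵥ Sum.elim a b = Sum.elim (P *ᵥ a + Q *ᵥ b) a := by
  simp [fromBlocks_mulVec]

theorem sumElim_eq_companion_pow_mulVec [CommRing R] (P Q : Matrix m m R) {e : ℕ → m → R}
    (h : ∀ t, e (t + 2) = P *ᵥ e (t + 1) + Q *ᵥ e t) (t : ℕ) :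
    Sum.elim (e (t + 1)) (e t) = fromBlocks P Q 1 0 ^ t *ᵥ Sum.elim (e 1) (e 0) :=
  pow_mulVec_of_forall_succ (x := fun t => Sum.elim (e (t + 1)) (e t))
    (fun t => by rw [fromBlocks_one_zero_mulVec_sumElim, h]) t

end Matrix

theorem norm_le_norm_sumElim_right {ι κ E : Type*} [Fintype ι] [Fintype κ]
    [SeminormedAddCommGroup E] (a : ι → E) (b : κ → E) : ‖b‖ ≤ ‖Sum.elim a b‖ :=
  (pi_norm_le_iff_of_nonneg (norm_nonneg _)).mpr fun i => norm_le_pi_norm (Sum.elim a b) (.inr i)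

theorem heavyBall_two_step {E : Type*} [AddCommGroup E] [Module ℝ E] {α β : ℝ} {θ v w : ℕ → E}
    (hw : ∀ t, w (t + 1) = β • w t + α • v t) (hθ : ∀ t, θ (t + 1) = θ t - w (t + 1)) (t : ℕ) :
    θ (t + 2) = θ (t + 1) + β • (θ (t + 1) - θ t) - α • v (t + 1) := by
  have hw_eq_diff : ∀ s, w (s + 1) = θ s - θ (s + 1) := fun s => by rw [hθ s]; abel
  rw [hθ (t + 1), hw, hw_eq_diff t]
  module

section Expectation

variable {Ω n : Type*} [Fintype n] [MeasurableSpace Ω] {P : Measure Ω}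

@[fun_prop]
theorem MeasureTheory.Integrable.matrix_mulVec {m : Type*} [Fintype m] (H : Matrix m n ℝ)
    {f : Ω → n → ℝ} (hf : Integrable f P) : Integrable (fun ω => H *ᵥ f ω) P :=
  (Matrix.mulVecLin H).toContinuousLinearMap.integrable_comp hf

theorem MeasureTheory.integral_matrix_mulVec {m : Type*} [Fintype m] (H : Matrix m n ℝ)
    {f : Ω → n → ℝ} (hf : Integrable f P) : ∫ ω, H *ᵥ f ω ∂P = H *ᵥ ∫ ω, f ω ∂P :=
  (Matrix.mulVecLin H).toContinuousLinearMap.integral_comp_comm hf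

theorem integral_heavyBall_error_succ_succ [DecidableEq n] (H : Matrix n n ℝ) (θstar : n → ℝ)
    (α β : ℝ) (θ v w : ℕ → Ω → n → ℝ)
    (hw : ∀ t ω, w (t + 1) ω = β • w t ω + α • v t ω)
    (hθ : ∀ t ω, θ (t + 1) ω = θ t ω - w (t + 1) ω)
    (hθint : ∀ t, Integrable (θ t) P) (hvint : ∀ t, Integrable (v t) P)
    (hvmean : ∀ t, ∫ ω, v t ω ∂P = H *ᵥ ((∫ ω, θ t ω ∂P) - θstar)) (t : ℕ) :
    (∫ ω, θ (t + 2) ω ∂P) - θstar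
      = (1 - α • H + β • 1) *ᵥ ((∫ ω, θ (t + 1) ω ∂P) - θstar)
        + (-(β • (1 : Matrix n n ℝ))) *ᵥ ((∫ ω, θ t ω ∂P) - θstar) := by
  have hstep : ∀ ω, θ (t + 2) ω = θ (t + 1) ω + β • (θ (t + 1) ω - θ t ω) - α • v (t + 1) ω :=
    fun ω => heavyBall_two_step (θ := (θ · ω)) (v := (v · ω)) (w := (w · ω)) (hw · ω) (hθ · ω) t
  have hθs := hθint t
  have hθs' := hθint (t + 1)
  have hvs' := hvint (t + 1)
  simp_rw [hstep]
  rw [integral_sub (by fun_prop) (by fun_prop), integral_add hθs' (by fun_prop), integral_smul,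
    integral_smul, integral_sub hθs' hθs, hvmean]
  simp only [Matrix.add_mulVec, Matrix.sub_mulVec, Matrix.neg_mulVec, Matrix.smul_mulVec,
    Matrix.one_mulVec, Matrix.mulVec_sub]
  module

variable [IsProbabilityMeasure P]

theorem integral_sub_const {f : Ω → n → ℝ} (hf : Integrable f P) (c : n → ℝ) :
    ∫ ω, (f ω - c) ∂P = (∫ ω, f ω ∂P) - c := by
  rw [integral_sub hf (integrable_const c), integral_const, probReal_univ, one_smul]

theorem integral_igt_eq_mulVec (H : Matrix n n ℝ) (θstar : n → ℝ) (g : (n → ℝ) → (n → ℝ))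
    (hg : ∀ x, g x = H *ᵥ (x - θstar)) (ε θ v : ℕ → Ω → n → ℝ)
    (hεint : ∀ t, Integrable (ε t) P) (hεmean : ∀ t, ∫ ω, ε t ω ∂P = 0)
    (hv0 : ∀ ω, v 0 ω = g (θ 0 ω) + ε 0 ω)
    (hv : ∀ t : ℕ, 1 ≤ t → ∀ ω, v t ω = ((t : ℝ) / ((t : ℝ) + 1)) • v (t - 1) ω
        + (1 / ((t : ℝ) + 1)) • g (θ t ω + (t : ℝ) • (θ t ω - θ (t - 1) ω))
        + (1 / ((t : ℝ) + 1)) • ε t ω)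
    (hθint : ∀ t, Integrable (θ t) P) (hvint : ∀ t, Integrable (v t) P) (t : ℕ) :
    ∫ ω, v t ω ∂P = H *ᵥ ((∫ ω, θ t ω ∂P) - θstar) := by
  simp only [hg] at hv0 hv
  induction t with
  | zero =>
    simp_rw [hv0]
    rw [integral_add (by fun_prop) (hεint 0), hεmean, add_zero,
      integral_matrix_mulVec H (by fun_prop), integral_sub_const (hθint 0)]
  | succ s ih =>
    have hv_succ := hv (s + 1) (by omega)
    simp only [Nat.add_sub_cancel] at hv_succ
    simp_rw [hv_succ]
    have hθs := hθint s
    have hθs' := hθint (s + 1)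
    have hvs := hvint s
    have hεs' := hεint (s + 1)
    rw [integral_add (by fun_prop) (by fun_prop), integral_add (by fun_prop) (by fun_prop),
      integral_smul, integral_smul, integral_smul, ih, hεmean, smul_zero, add_zero,
      integral_matrix_mulVec H (by fun_prop), integral_sub_const (by fun_prop),
      integral_add hθs' (by fun_prop), integral_smul, integral_sub hθs' hθs]
    simp only [Matrix.mulVec_sub, Matrix.mulVec_add, Matrix.mulVec_smul]
    match_scalars <;> (field_simp; try ring)

end Expectation

theorem heavyball_igt_bias_dynamics_general {d : ℕ}
    (H : Matrix (Fin d) (Fin d) ℝ)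
    (θstar : Fin d → ℝ) (α μ : ℝ)
    (g : (Fin d → ℝ) → (Fin d → ℝ)) (hg : ∀ x, g x = H.mulVec (x - θstar))
    {Ω : Type*} [MeasureSpace Ω] [IsProbabilityMeasure (ℙ : Measure Ω)]
    (ε : ℕ → Ω → Fin d → ℝ)
    (hεint : ∀ t, Integrable (ε t))
    (hεmean : ∀ t, (∫ ω, ε t ω) = 0)
    (θ v w : ℕ → Ω → Fin d → ℝ)
    (hv0 : ∀ ω, v 0 ω = g (θ 0 ω) + ε 0 ω)
    (hv : ∀ t : ℕ, 1 ≤ t → ∀ ω, v t ω = ((t : ℝ) / ((t : ℝ) + 1)) • v (t - 1) ω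
        + (1 / ((t : ℝ) + 1)) • g (θ t ω + (t : ℝ) • (θ t ω - θ (t - 1) ω))
        + (1 / ((t : ℝ) + 1)) • ε t ω)
    (hw : ∀ t : ℕ, ∀ ω, w (t + 1) ω = μ • w t ω + α • v t ω)
    (hθ : ∀ t : ℕ, ∀ ω, θ (t + 1) ω = θ t ω - w (t + 1) ω)
    (hθint : ∀ t, Integrable (θ t)) (hvint : ∀ t, Integrable (v t))
    (A : Matrix (Fin d ⊕ Fin d) (Fin d ⊕ Fin d) ℝ)
    (hA : A = Matrix.fromBlocks (1 - α • H + μ • 1) (-(μ • (1 : Matrix (Fin d) (Fin d) ℝ)))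
        1 0) :
    (∀ t : ℕ, 1 ≤ t →
      Sum.elim ((∫ ω, θ t ω) - θstar) ((∫ ω, θ (t - 1) ω) - θstar)
        = (A ^ (t - 1)).mulVec
            (Sum.elim ((∫ ω, θ 1 ω) - θstar) ((∫ ω, θ 0 ω) - θstar))) ∧
    (specRad A < 1 →
      ∃ C ρ : ℝ, 0 ≤ C ∧ 0 ≤ ρ ∧ ρ < 1 ∧
        ∀ t : ℕ, ‖(∫ ω, θ t ω) - θstar‖ ≤ C * ρ ^ t) := by
  set e : ℕ → Fin d → ℝ := fun t => (∫ ω, θ t ω) - θstar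
  have hvmean := integral_igt_eq_mulVec H θstar g hg ε θ v hεint hεmean hv0 hv hθint hvint
  have hstacked : ∀ t, Sum.elim (e (t + 1)) (e t) = A ^ t *ᵥ Sum.elim (e 1) (e 0) := by
    rw [hA]
    exact Matrix.sumElim_eq_companion_pow_mulVec _ _
      (integral_heavyBall_error_succ_succ H θstar α μ θ v w hw hθ hθint hvint hvmean)
  refine ⟨fun t ht => ?_, fun hA1 => ?_⟩
  · obtain ⟨s, rfl⟩ : ∃ s, t = s + 1 := ⟨t - 1, by omega⟩
    exact hstacked s
  · obtain ⟨C, ρ, hC, hρ0, hρ1, hbound⟩ := A.exists_norm_pow_mulVec_le_of_specRad_lt_one hA1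
    refine ⟨C * ‖Sum.elim (e 1) (e 0)‖, ρ, by positivity, hρ0, hρ1, fun t => ?_⟩
    calc ‖e t‖ ≤ ‖Sum.elim (e (t + 1)) (e t)‖ := norm_le_norm_sumElim_right _ _
      _ ≤ C * ρ ^ t * ‖Sum.elim (e 1) (e 0)‖ := by rw [hstacked]; exact hbound t _
      _ = C * ‖Sum.elim (e 1) (e 0)‖ * ρ ^ t := by ring

/-- **Bias dynamics of Heavyball-IGT on a quadratic.** With `H` symmetric positive definite,
`g θ = H (θ - θ*)`, zero-mean integrable noises, and the Heavyball-IGT iterates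
(θ 0 deterministic, all iterates integrable), the stacked expected errors satisfy
`(E[θ t - θ*], E[θ (t-1) - θ*]) = A^(t-1) (E[θ 1 - θ*], E[θ 0 - θ*])` for `t ≥ 1`, where
`A = [[I - αH + μI, -μI], [I, 0]]`. In particular, if the spectral radius of `A` is less
than `1`, then `E[θ t - θ*]` converges linearly to zero. -/
theorem heavyball_igt_bias_dynamics {d : ℕ}
    (H : Matrix (Fin d) (Fin d) ℝ) (hsymm : H.IsSymm) (hpd : H.PosDef)
    (θstar : Fin d → ℝ) (α μ : ℝ) (hα : 0 < α) (hμ : 0 ≤ μ)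
    (g : (Fin d → ℝ) → (Fin d → ℝ)) (hg : ∀ x, g x = H.mulVec (x - θstar))
    {Ω : Type*} [MeasureSpace Ω] [IsProbabilityMeasure (ℙ : Measure Ω)]
    (ε : ℕ → Ω → Fin d → ℝ)
    (hεint : ∀ t, Integrable (ε t))
    (hεmean : ∀ t, (∫ ω, ε t ω) = 0)
    (θ v w : ℕ → Ω → Fin d → ℝ)
    (θ₀ : Fin d → ℝ) (hθ0 : θ 0 = fun _ => θ₀)
    (hv0 : ∀ ω, v 0 ω = g (θ 0 ω) + ε 0 ω)
    (hw0 : ∀ ω, w 0 ω = 0)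
    (hv : ∀ t : ℕ, 1 ≤ t → ∀ ω, v t ω = ((t : ℝ) / ((t : ℝ) + 1)) • v (t - 1) ω
        + (1 / ((t : ℝ) + 1)) • g (θ t ω + (t : ℝ) • (θ t ω - θ (t - 1) ω))
        + (1 / ((t : ℝ) + 1)) • ε t ω)
    (hw : ∀ t : ℕ, ∀ ω, w (t + 1) ω = μ • w t ω + α • v t ω)
    (hθ : ∀ t : ℕ, ∀ ω, θ (t + 1) ω = θ t ω - w (t + 1) ω)
    (hθint : ∀ t, Integrable (θ t)) (hvint : ∀ t, Integrable (v t))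
    (hwint : ∀ t, Integrable (w t))
    (A : Matrix (Fin d ⊕ Fin d) (Fin d ⊕ Fin d) ℝ)
    (hA : A = Matrix.fromBlocks (1 - α • H + μ • 1) (-(μ • (1 : Matrix (Fin d) (Fin d) ℝ)))
        1 0) :
    (∀ t : ℕ, 1 ≤ t →
      Sum.elim ((∫ ω, θ t ω) - θstar) ((∫ ω, θ (t - 1) ω) - θstar)
        = (A ^ (t - 1)).mulVec
            (Sum.elim ((∫ ω, θ 1 ω) - θstar) ((∫ ω, θ 0 ω) - θstar))) ∧
    (specRad A < 1 →
      ∃ C ρ : ℝ, 0 ≤ C ∧ 0 ≤ ρ ∧ ρ < 1 ∧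
        ∀ t : ℕ, ‖(∫ ω, θ t ω) - θstar‖ ≤ C * ρ ^ t) :=
  heavyball_igt_bias_dynamics_general H θstar α μ g hg ε hεint hεmean θ v w hv0 hv hw hθ hθint hvint
    A hA
end

section
/- Let h > 0 and 0 < α < 2/(3h). For μ ≥ 0 let D(α, μ, h) be the 3×3 real matrix with rows ((1 − αh + μ)² + 2α²h², μ², −2μ(1 − αh + μ)²), (1, 0, 0), (1 − αh + μ, 0, −μ), and let A(α, μ, h) be the 2×2 real matrix with rows (1 − αh + μ, −μ) and (1, 0). Then there exists μ > 0 such that the spectral radius of D(α, μ, h) is strictly less than 1 and the spectral radius of A(α, μ, h) is strictly less than 1. -/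
/-!
Instead of perturbing the eigenvalues at `μ = 0`, take the explicit momentum
`μ = t(2 - 3t)/20` with `t = αh` and bound each spectral radius by the `∞`-operator norm of
the matrix conjugated by `diag(1, 1/2, 1)` (resp. `diag(1, 1/2)`). Every absolute row sum of the
conjugated matrices is then below `1`; for the first row of `D` this reduces, at `μ = 0`, to
`1 - 2t + 3t² < 1`, which is exactly `αh < 2/3`, and `μ` is small enough not to spoil it.
-/

open Matrix

section WeightedRowSum

attribute [local instance] Matrix.linftyOpSeminormedAddCommGroup Matrix.linftyOpNormedRing
  Matrix.linftyOpNormedAlgebra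

lemma linfty_opNorm_lt_of_forall_row_sum_lt {m n α : Type*} [Fintype m] [Fintype n]
    [SeminormedAddCommGroup α] [Nonempty m] (B : Matrix m n α) {r : ℝ}
    (hB : ∀ i, ∑ j, ‖B i j‖ < r) : ‖B‖ < r := by
  have hr : 0 < r :=
    (Finset.sum_nonneg fun j _ => norm_nonneg _).trans_lt (hB (Classical.arbitrary m))
  lift r to NNReal using hr.le
  rw [← coe_nnnorm, NNReal.coe_lt_coe, linfty_opNNNorm_def, Finset.sup_lt_iff hr]
  intro i _
  rw [← NNReal.coe_lt_coe]
  push_cast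
  exact hB i

variable {n : Type*} [Fintype n] [DecidableEq n]

lemma specRad_le_linfty_opNorm_units_conj [Nonempty n] (M : Matrix n n ℝ)
    (u : (Matrix n n ℂ)ˣ) :
    specRad M ≤ ‖(u : Matrix n n ℂ) * M.map (algebraMap ℝ ℂ) * (↑u⁻¹ : Matrix n n ℂ)‖ := by
  refine Real.sSup_le ?_ (norm_nonneg _)
  rintro _ ⟨z, hz, rfl⟩
  exact spectrum.norm_le_norm_of_mem (by rwa [spectrum.units_conjugate])

noncomputable def diagonalUnit (c : n → ℂ) (hc : ∀ i, c i ≠ 0) : (Matrix n n ℂ)ˣ where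
  val := diagonal c
  inv := diagonal c⁻¹
  val_inv := by simp [diagonal_mul_diagonal, hc]
  inv_val := by simp [diagonal_mul_diagonal, hc]

lemma diagonalUnit_conj_apply (c : n → ℂ) (hc : ∀ i, c i ≠ 0) (B : Matrix n n ℂ) (i j : n) :
    ((diagonalUnit c hc : Matrix n n ℂ) * B * (↑(diagonalUnit c hc)⁻¹ : Matrix n n ℂ)) i j
      = c i * B i j / c j := by
  simp [diagonalUnit, diagonal_mul, mul_diagonal, div_eq_mul_inv]

lemma specRad_lt_of_weighted_row_sum_lt [Nonempty n] (M : Matrix n n ℝ) (s : n → ℝ)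
    (hs : ∀ i, 0 < s i) {r : ℝ} (hM : ∀ i, ∑ j, s i * |M i j| / s j < r) : specRad M < r := by
  have hc : ∀ i, (s i : ℂ) ≠ 0 := fun i => Complex.ofReal_ne_zero.mpr (hs i).ne'
  refine (specRad_le_linfty_opNorm_units_conj M (diagonalUnit _ hc)).trans_lt ?_
  refine linfty_opNorm_lt_of_forall_row_sum_lt _ fun i => ?_
  convert hM i using 2 with j
  rw [diagonalUnit_conj_apply]
  simp [abs_of_pos (hs i), abs_of_pos (hs j)]

end WeightedRowSum

lemma specRad_heavyBall_lt_one {t μ : ℝ} (hμ : 0 < μ) (hμt : 3 * μ < t) (ht : t < 1) :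
    specRad !![1 - t + μ, -μ; 1, 0] < 1 := by
  have hpos : 0 < 1 - t + μ := by linarith
  refine specRad_lt_of_weighted_row_sum_lt _ ![1, 1 / 2] (by simp [Fin.forall_fin_two]) ?_
  simp [Fin.forall_fin_two, Fin.sum_univ_two, abs_of_pos hμ, abs_of_pos hpos]
  constructor <;> linarith

lemma specRad_heavyBallIGT_lt_one {t μ : ℝ} (hμ : 0 < μ) (hμt : 3 * μ < t) (ht : t < 1)
    (hrow : (1 - t + μ) ^ 2 * (1 + 2 * μ) + 2 * t ^ 2 + 2 * μ ^ 2 < 1) :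
    specRad !![(1 - t + μ) ^ 2 + 2 * t ^ 2, μ ^ 2, -2 * μ * (1 - t + μ) ^ 2;
      1, 0, 0; 1 - t + μ, 0, -μ] < 1 := by
  have hpos : 0 < 1 - t + μ := by linarith
  have hdiag : 0 ≤ (1 - t + μ) ^ 2 + 2 * t ^ 2 := by positivity
  refine specRad_lt_of_weighted_row_sum_lt _ ![1, 1 / 2, 1] (by simp [Fin.forall_fin_succ]) ?_
  simp [Fin.forall_fin_succ, Fin.sum_univ_three, abs_of_pos hμ, abs_of_pos hpos,
    abs_of_nonneg hdiag]
  exact ⟨by linear_combination hrow, by norm_num, by linarith⟩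

lemma exists_momentum_of_lt_two_thirds {t : ℝ} (ht0 : 0 < t) (ht : t < 2 / 3) :
    ∃ μ : ℝ, 0 < μ ∧ 3 * μ < t ∧
      (1 - t + μ) ^ 2 * (1 + 2 * μ) + 2 * t ^ 2 + 2 * μ ^ 2 < 1 := by
  refine ⟨t * (2 - 3 * t) / 20, by nlinarith, by nlinarith, ?_⟩
  nlinarith [sq_nonneg t]

/-- **Existence of a positive momentum keeping the Heavyball-IGT dynamics stable.** For `h > 0`
and `0 < α < 2/(3h)`, with
`D(α, μ, h) = [[(1-αh+μ)² + 2α²h², μ², -2μ(1-αh+μ)²], [1, 0, 0], [1-αh+μ, 0, -μ]]` and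
`A(α, μ, h) = [[1-αh+μ, -μ], [1, 0]]`, there exists `μ > 0` such that both spectral radii
are strictly less than `1`. -/
theorem heavyball_igt_exists_positive_momentum
    (h α : ℝ) (hh : 0 < h) (hα0 : 0 < α) (hα : α < 2 / (3 * h))
    (D : ℝ → Matrix (Fin 3) (Fin 3) ℝ)
    (hD : ∀ μ : ℝ, D μ = !![(1 - α * h + μ) ^ 2 + 2 * α ^ 2 * h ^ 2, μ ^ 2,
        -2 * μ * (1 - α * h + μ) ^ 2; 1, 0, 0; 1 - α * h + μ, 0, -μ])
    (A : ℝ → Matrix (Fin 2) (Fin 2) ℝ)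
    (hA : ∀ μ : ℝ, A μ = !![1 - α * h + μ, -μ; 1, 0]) :
    ∃ μ : ℝ, 0 < μ ∧ specRad (D μ) < 1 ∧ specRad (A μ) < 1 := by
  have hαh : α * h < 2 / 3 := by
    have := (lt_div_iff₀ (by positivity : (0 : ℝ) < 3 * h)).mp hα
    linarith
  obtain ⟨μ, hμ, hμt, hrow⟩ := exists_momentum_of_lt_two_thirds (mul_pos hα0 hh) hαh
  refine ⟨μ, hμ, ?_, ?_⟩
  · rw [hD]
    convert specRad_heavyBallIGT_lt_one hμ hμt (by linarith) hrow using 5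
    ring
  · rw [hA]
    exact specRad_heavyBall_lt_one hμ hμt (by linarith)
end
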